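/- Let β ∈ ℂ with Re(β) > 0, ε > 0, k ∈ ℕ, and R > exp^∘k(0) with M_{ε,k}(R) < Re(β). Let D ⊆ ℂ satisfy Re(ζ) ≥ R for all ζ ∈ D, and let f : D → D satisfy |f(ζ) − (ζ + β)| ≤ M_{ε,k}(Re(ζ)) for all ζ ∈ D. Then for every ζ ∈ D and every n ∈ ℕ: |f^∘(n+1)(ζ) − (n+1)·β − (f^∘n(ζ) − n·β)| ≤ M_{ε,k}(R + n·(Re(β) − M_{ε,k}(R))). -/
import Mathlib


open Filter Set

/-- `M_{ε,k}(x) = (∏_{j=0}^{k-1} log^∘j(x))⁻¹ · (log^∘k(x))^{-(1+ε)}`. -/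
noncomputable def Mfun (ε : ℝ) (k : ℕ) (x : ℝ) : ℝ :=
  (∏ j ∈ Finset.range k, Real.log^[j] x)⁻¹ * (Real.log^[k] x) ^ (-(1 + ε))

lemma iterLog_gt (k : ℕ) : ∀ j ≤ k, ∀ x : ℝ, Real.exp^[k] 0 < x →
    Real.exp^[k - j] 0 < Real.log^[j] x := by
  intro j
  induction j with
  | zero => intro _ x hx; simpa using hx
  | succ j ih =>
    intro hjk x hx
    have hj : j ≤ k := Nat.le_of_succ_le hjk
    have h1 := ih hj x hx
    have hkj : k - j = (k - (j + 1)) + 1 := by omega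
    rw [hkj, Function.iterate_succ_apply'] at h1
    rw [Function.iterate_succ_apply']
    calc Real.exp^[k - (j+1)] 0 = Real.log (Real.exp (Real.exp^[k - (j+1)] 0)) :=
          (Real.log_exp _).symm
      _ < Real.log (Real.log^[j] x) := Real.log_lt_log (Real.exp_pos _) h1

lemma iterLog_pos (k : ℕ) {j : ℕ} (hj : j ≤ k) {x : ℝ} (hx : Real.exp^[k] 0 < x) :
    0 < Real.log^[j] x := by
  refine lt_of_le_of_lt ?_ (iterLog_gt k j hj x hx)
  rcases Nat.eq_zero_or_pos (k - j) with h | h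
  · simp [h]
  · obtain ⟨m, hm⟩ := Nat.exists_eq_succ_of_ne_zero h.ne'
    rw [hm, Function.iterate_succ_apply']
    exact (Real.exp_pos _).le

lemma iterLog_mono (k : ℕ) {j : ℕ} (hj : j ≤ k) {x y : ℝ} (hx : Real.exp^[k] 0 < x)
    (hxy : x ≤ y) : Real.log^[j] x ≤ Real.log^[j] y := by
  induction j with
  | zero => simpa using hxy
  | succ j ih =>
    have hj' : j ≤ k := Nat.le_of_succ_le hj
    rw [Function.iterate_succ_apply', Function.iterate_succ_apply']
    exact Real.log_le_log (iterLog_pos k hj' hx) (ih hj')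

lemma Mfun_pos {ε : ℝ} (hε : 0 < ε) (k : ℕ) {x : ℝ} (hx : Real.exp^[k] 0 < x) :
    0 < Mfun ε k x := by
  apply mul_pos
  · exact inv_pos.mpr <| Finset.prod_pos fun j hj =>
      iterLog_pos k (le_of_lt (Finset.mem_range.mp hj)) hx
  · exact Real.rpow_pos_of_pos (iterLog_pos k le_rfl hx) _

lemma Mfun_anti {ε : ℝ} (hε : 0 < ε) (k : ℕ) {x y : ℝ} (hx : Real.exp^[k] 0 < x)
    (hxy : x ≤ y) : Mfun ε k y ≤ Mfun ε k x := by
  have hprod : (∏ j ∈ Finset.range k, Real.log^[j] x) ≤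
      ∏ j ∈ Finset.range k, Real.log^[j] y := by
    refine Finset.prod_le_prod (fun j hj => ?_) (fun j hj => ?_)
    · exact (iterLog_pos k (le_of_lt (Finset.mem_range.mp hj)) hx).le
    · exact iterLog_mono k (le_of_lt (Finset.mem_range.mp hj)) hx hxy
  have hppos : 0 < ∏ j ∈ Finset.range k, Real.log^[j] x :=
    Finset.prod_pos fun j hj => iterLog_pos k (le_of_lt (Finset.mem_range.mp hj)) hx
  apply mul_le_mul
  · exact inv_anti₀ hppos hprod
  · exact Real.rpow_le_rpow_of_nonpos (iterLog_pos k le_rfl hx)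
      (iterLog_mono k le_rfl hx hxy) (by linarith)
  · exact (Real.rpow_pos_of_pos (iterLog_pos k le_rfl (lt_of_lt_of_le hx hxy)) _).le
  · exact (inv_pos.mpr hppos).le

theorem koenigs_sequence_consecutive_difference_bound
    (β : ℂ) (hβ : 0 < β.re) (ε : ℝ) (hε : 0 < ε) (k : ℕ)
    (R : ℝ) (hR : Real.exp^[k] 0 < R) (hMR : Mfun ε k R < β.re)
    (D : Set ℂ) (hDre : ∀ ζ ∈ D, R ≤ ζ.re)
    (f : ℂ → ℂ) (hinv : Set.MapsTo f D D)
    (hbound : ∀ ζ ∈ D, ‖f ζ - (ζ + β)‖ ≤ Mfun ε k ζ.re) :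
    ∀ ζ ∈ D, ∀ n : ℕ,
      ‖f^[n + 1] ζ - ((n : ℂ) + 1) * β - (f^[n] ζ - (n : ℂ) * β)‖ ≤
        Mfun ε k (R + n * (β.re - Mfun ε k R)) := by
  intro ζ hζ n
  set δ := β.re - Mfun ε k R with hδdef
  have hδ : 0 < δ := by linarith
  -- key induction
  have key : ∀ m : ℕ, f^[m] ζ ∈ D ∧ R + m * δ ≤ (f^[m] ζ).re := by
    intro m
    induction m with
    | zero => exact ⟨hζ, by simpa using hDre ζ hζ⟩
    | succ m ih =>
      obtain ⟨hmem, hre⟩ := ih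
      set w := f^[m] ζ
      have hwR : R ≤ w.re := le_trans (by nlinarith [Nat.cast_nonneg (α := ℝ) m]) hre
      have hfw : f^[m + 1] ζ = f w := Function.iterate_succ_apply' f m ζ
      refine ⟨hfw ▸ hinv hmem, ?_⟩
      have hb := hbound w hmem
      have hreb : |(f w - (w + β)).re| ≤ Mfun ε k w.re :=
        le_trans (Complex.abs_re_le_norm _) hb
      have hMw : Mfun ε k w.re ≤ Mfun ε k R := Mfun_anti hε k hR hwR
      have h1 : (f w).re - w.re - β.re ≥ -(Mfun ε k R) := by
        have := abs_le.mp hreb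
        simp only [Complex.sub_re, Complex.add_re] at this
        linarith [this.1]
      rw [hfw]
      push_cast
      nlinarith [Nat.cast_nonneg (α := ℝ) m]
  obtain ⟨hmem, hre⟩ := key n
  set w := f^[n] ζ
  have hRn : Real.exp^[k] 0 < R + n * δ := by
    nlinarith [Nat.cast_nonneg (α := ℝ) n]
  have heq : f^[n + 1] ζ - ((n : ℂ) + 1) * β - (f^[n] ζ - (n : ℂ) * β)
      = f w - (w + β) := by
    rw [Function.iterate_succ_apply' f n ζ]; ring
  rw [heq]
  exact le_trans (hbound w hmem) (Mfun_anti hε k hRn hre)
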